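/- Subject to the diagonal-shear boundary condition BC1, at the critical aspect ratio L=1 one has J_1=0; that is, for every ε>0 there exists an admissible pair (u,β) satisfying BC1 on Ω_1 with E_1(u,β)<ε. -/

import Mathlib

open MeasureTheory Set Filter Topology
open scoped ENNReal NNReal

noncomputable section

abbrev Pt2 := Fin 2 → ℝ
abbrev Mat2 := Matrix (Fin 2) (Fin 2) ℝ

/-- The rectangle Ω_L = (0,1) × (0,L). -/
def Omega (L : ℝ) : Set Pt2 := {x | x 0 ∈ Ioo (0:ℝ) 1 ∧ x 1 ∈ Ioo (0:ℝ) L}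

/-- Partial derivative ∂_j of a scalar function. -/
def pd (j : Fin 2) (f : Pt2 → ℝ) (x : Pt2) : ℝ := fderiv ℝ f x (Pi.single j 1)

/-- C¹ test function compactly supported in Ω_L. -/
def IsTest (L : ℝ) (f : Pt2 → ℝ) : Prop :=
  ContDiff ℝ 1 f ∧ HasCompactSupport f ∧ tsupport f ⊆ Omega L

/-- Du is the weak (distributional) gradient of u on Ω_L. -/
def IsWeakGradient (L : ℝ) (u : Pt2 → Pt2) (Du : Pt2 → Mat2) : Prop :=
  ∀ f : Pt2 → ℝ, IsTest L f → ∀ i j,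
    ∫ x in Omega L, u x i * pd j f x = - ∫ x in Omega L, Du x i j * f x

/-- Symmetric part of a matrix. -/
def symPart (M : Mat2) : Mat2 := (2:ℝ)⁻¹ • (M + M.transpose)

/-- Squared Frobenius norm. -/
def normSq (M : Mat2) : ℝ := ∑ i, ∑ j, (M i j)^2

/-- The two slip matrices (up to scalar multiples). -/
def SlipSet : Set Mat2 :=
  {M | ∃ s : ℝ, M = s • !![(1:ℝ), -1; 1, -1] ∨ M = s • !![(1:ℝ), 1; -1, -1]}

/-- The single-slip side condition. -/
def SingleSlip (L : ℝ) (β : Pt2 → Mat2) : Prop :=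
  ∀ᵐ x ∂(volume.restrict (Omega L)), β x ∈ SlipSet

/-- Total variation of the row-wise distributional curl of β on Ω_L. -/
def TVcurl (L : ℝ) (β : Pt2 → Mat2) : ℝ≥0∞ :=
  sSup {t | ∃ φ : Fin 2 → Pt2 → ℝ,
    (∀ i, IsTest L (φ i)) ∧ (∀ i x, φ i x ∈ Icc (-1:ℝ) 1) ∧
    t = ENNReal.ofReal (∑ i, ∫ x in Omega L,
          (β x i 1 * pd 0 (φ i) x - β x i 0 * pd 1 (φ i) x))}

/-- The energy E_L(u,β) (expressed through the weak gradient Du of u). -/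
def Energy (L σ : ℝ) (Du β : Pt2 → Mat2) : ℝ≥0∞ :=
  (∫⁻ x in Omega L, ENNReal.ofReal (normSq (symPart (Du x - β x)))) +
    ENNReal.ofReal σ * TVcurl L β

/-- Admissible pair (u,β), with Du the weak gradient of u. -/
def IsAdmissible (L : ℝ) (u : Pt2 → Pt2) (Du β : Pt2 → Mat2) : Prop :=
  ContinuousOn u (closure (Omega L)) ∧
  IsWeakGradient L u Du ∧
  (∀ i j, MemLp (fun x => Du x i j) 2 (volume.restrict (Omega L))) ∧
  (∀ i j, LocallyIntegrableOn (fun x => β x i j) (Omega L)) ∧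
  SingleSlip L β

/-- Dirichlet boundary conditions: u = 0 at x₂ = 0 and u = γ v at x₂ = L. -/
def BCv (L γ : ℝ) (v : Fin 2 → ℝ) (u : Pt2 → Pt2) : Prop :=
  (∀ x ∈ closure (Omega L), x 1 = 0 → u x = 0) ∧
  (∀ x ∈ closure (Omega L), x 1 = L → u x = γ • v)

/-- The infimum energy J_L. -/
def J (L σ γ : ℝ) (v : Fin 2 → ℝ) : ℝ≥0∞ :=
  sInf {e | ∃ u Du β, IsAdmissible L u Du β ∧ BCv L γ v u ∧ TVcurl L β ≠ ⊤ ∧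
    e = Energy L σ Du β}

/-!
Take `u = g (1, 1)` and `β = f(x₀ - x₁) (1, 1) ⊗ (1, -1)`. Then `β` is curl-free, being constant
along `(1, 1)`, and the elastic energy is at most `2 ∫ |∇g - f(x₀ - x₁) (1, -1)|²`. A function of
`x₀ - x₁` alone would cost nothing, but it cannot meet both boundary conditions: for `L = 1` the
bottom edge lies in `{x₀ ≥ x₁}` and the top edge in `{x₀ ≤ x₁}`. So `g` jumps by `γ` across a thin
strip `-2d ≤ x₀ - x₁ ≤ -d`, and the strip has to be switched off near the corner `(1, 1)`, where it
meets the top edge. The misfit lives on a `d × d` square at the corner, with gradients of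
size `1 / d`, so it costs order `γ²` whatever `d` is. Splitting the jump into `N` layers of height
`γ / N` at the scales `4⁻ᵏ`, whose misfits have disjoint supports, costs `N (γ / N)² = γ² / N`.
-/

open Real

lemma deriv_smoothTransition_eq_zero {s : ℝ} (hs : s ∉ Icc (0 : ℝ) 1) :
    deriv smoothTransition s = 0 := by
  rw [mem_Icc, not_and_or, not_le, not_le] at hs
  rcases hs with h | h
  · have : smoothTransition =ᶠ[𝓝 s] fun _ => 0 := by
      filter_upwards [Iio_mem_nhds h] with r hr using smoothTransition.zero_of_nonpos hr.le
    simp [this.deriv_eq]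
  · have : smoothTransition =ᶠ[𝓝 s] fun _ => 1 := by
      filter_upwards [Ioi_mem_nhds h] with r hr using smoothTransition.one_of_one_le hr.le
    simp [this.deriv_eq]

def transitionSlope : ℝ := ⨆ s, |deriv smoothTransition s|

lemma abs_deriv_smoothTransition_le (s : ℝ) : |deriv smoothTransition s| ≤ transitionSlope := by
  obtain ⟨C, hC⟩ := (smoothTransition.contDiff (n := 1)).continuous_deriv le_rfl
    |>.bounded_above_of_compact_support
      (HasCompactSupport.intro isCompact_Icc fun _ => deriv_smoothTransition_eq_zero)
  exact le_ciSup ⟨C, forall_mem_range.2 hC⟩ s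

def ramp (a b r : ℝ) : ℝ := smoothTransition ((r - a) / (b - a))

section ramp

variable {a b : ℝ}

lemma ramp_of_le (hab : a < b) {r : ℝ} (hr : r ≤ a) : ramp a b r = 0 :=
  smoothTransition.zero_of_nonpos (div_nonpos_of_nonpos_of_nonneg (by linarith) (by linarith))

lemma ramp_of_ge (hab : a < b) {r : ℝ} (hr : b ≤ r) : ramp a b r = 1 :=
  smoothTransition.one_of_one_le ((one_le_div (by linarith)).2 (by linarith))

lemma ramp_ne_zero (hab : a < b) {r : ℝ} (h : ramp a b r ≠ 0) : a < r :=
  lt_of_not_ge fun hr => h (ramp_of_le hab hr)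

lemma ramp_nonneg (r : ℝ) : 0 ≤ ramp a b r := smoothTransition.nonneg _

lemma ramp_le_one (r : ℝ) : ramp a b r ≤ 1 := smoothTransition.le_one _

lemma contDiff_ramp {n : ℕ∞} : ContDiff ℝ n (ramp a b) :=
  smoothTransition.contDiff.comp ((contDiff_id.sub contDiff_const).div_const _)

lemma deriv_ramp (r : ℝ) :
    deriv (ramp a b) r = deriv smoothTransition ((r - a) / (b - a)) / (b - a) := by
  have hin : HasDerivAt (fun r => (r - a) / (b - a)) (1 / (b - a)) r :=
    ((hasDerivAt_id r).sub_const a).div_const _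
  have hst := ((smoothTransition.contDiff (n := 1)).differentiable one_ne_zero
    ((r - a) / (b - a))).hasDerivAt
  rw [← mul_one_div]
  exact (hst.comp r hin).deriv

lemma abs_deriv_ramp_le (hab : a < b) (r : ℝ) :
    |deriv (ramp a b) r| ≤ transitionSlope / (b - a) := by
  rw [deriv_ramp, abs_div, abs_of_pos (sub_pos.2 hab)]
  exact div_le_div_of_nonneg_right (abs_deriv_smoothTransition_le _) (sub_pos.2 hab).le

lemma deriv_ramp_eq_zero (hab : a < b) {r : ℝ} (hr : r ∉ Icc a b) : deriv (ramp a b) r = 0 := by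
  rw [deriv_ramp, deriv_smoothTransition_eq_zero, zero_div]
  rw [mem_Icc, le_div_iff₀ (by linarith), div_le_one (by linarith)]
  exact fun h => hr ⟨by linarith [h.1], by linarith [h.2]⟩

lemma mem_Icc_of_deriv_ramp_ne_zero (hab : a < b) {r : ℝ} (h : deriv (ramp a b) r ≠ 0) :
    r ∈ Icc a b :=
  by_contra fun hr => h (deriv_ramp_eq_zero hab hr)

lemma deriv_ramp_mul_deriv_ramp_eq_zero {a' b' : ℝ} (hab : a < b) (ha'b' : a' < b') (h : b < a')
    (r : ℝ) : deriv (ramp a b) r * deriv (ramp a' b') r = 0 := by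
  by_contra hne
  have h₁ := mem_Icc_of_deriv_ramp_ne_zero hab (left_ne_zero_of_mul hne)
  have h₂ := mem_Icc_of_deriv_ramp_ne_zero ha'b' (right_ne_zero_of_mul hne)
  linarith [h₁.2, h₂.1]

end ramp

section pd

variable {f g : Pt2 → ℝ} {x : Pt2}

lemma pd_const_sub (c : ℝ) (j : Fin 2) : pd j (fun y => c - f y) x = -pd j f x := by
  simp [pd, fderiv_const_sub]

lemma pd_neg (j : Fin 2) : pd j (fun y => -f y) x = -pd j f x := by
  simp [pd, fderiv_fun_neg]

lemma pd_sub (hf : DifferentiableAt ℝ f x) (hg : DifferentiableAt ℝ g x) (j : Fin 2) :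
    pd j (fun y => f y - g y) x = pd j f x - pd j g x := by
  simp [pd, fderiv_fun_sub hf hg]

lemma pd_mul (hf : DifferentiableAt ℝ f x) (hg : DifferentiableAt ℝ g x) (j : Fin 2) :
    pd j (fun y => f y * g y) x = pd j f x * g x + f x * pd j g x := by
  simp only [pd, fderiv_fun_mul hf hg, add_apply, smul_apply, smul_eq_mul]
  ring

lemma pd_const_mul (hf : DifferentiableAt ℝ f x) (c : ℝ) (j : Fin 2) :
    pd j (fun y => c * f y) x = c * pd j f x := by
  simp [pd, fderiv_const_mul hf]

lemma pd_sum {ι : Type*} (s : Finset ι) {F : ι → Pt2 → ℝ}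
    (hF : ∀ i ∈ s, DifferentiableAt ℝ (F i) x) (j : Fin 2) :
    pd j (fun y => ∑ i ∈ s, F i y) x = ∑ i ∈ s, pd j (F i) x := by
  simp [pd, fderiv_fun_sum hF]

lemma pd_comp {ψ : ℝ → ℝ} (hψ : DifferentiableAt ℝ ψ (f x)) (hf : DifferentiableAt ℝ f x)
    (j : Fin 2) : pd j (fun y => ψ (f y)) x = deriv ψ (f x) * pd j f x := by
  rw [pd, pd, show (fun y => ψ (f y)) = ψ ∘ f from rfl,
    (hψ.hasDerivAt.comp_hasFDerivAt x hf.hasFDerivAt).fderiv]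
  rfl

lemma pd_apply (i j : Fin 2) : pd j (fun y : Pt2 => y i) x = (Pi.single j 1 : Pt2) i := by
  simp [pd, (hasFDerivAt_apply i x).fderiv]

lemma continuous_pd (hf : ContDiff ℝ 1 f) (j : Fin 2) : Continuous (pd j f) :=
  (hf.continuous_fderiv one_ne_zero).clm_apply continuous_const

end pd

def grad (u : Pt2 → Pt2) (x : Pt2) : Mat2 := Matrix.of fun i j => pd j (fun y => u y i) x

section Omega

variable {L : ℝ} {f : Pt2 → ℝ}

lemma IsTest.eq_zero_of_notMem (hf : IsTest L f) {x : Pt2} (hx : x ∉ Omega L) : f x = 0 :=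
  image_eq_zero_of_notMem_tsupport fun h => hx (hf.2.2 h)

lemma IsTest.pd_eq_zero_of_notMem (hf : IsTest L f) {x : Pt2} (hx : x ∉ Omega L) (j : Fin 2) :
    pd j f x = 0 := by
  simp [pd, fderiv_of_notMem_tsupport (𝕜 := ℝ) fun h => hx (hf.2.2 h)]

lemma IsTest.integrable_mul_pd (hf : IsTest L f) {F : Pt2 → ℝ} (hF : Continuous F) (j : Fin 2) :
    Integrable fun x => F x * pd j f x :=
  (hF.mul (continuous_pd hf.1 j)).integrable_of_hasCompactSupport
    (hf.2.1.fderiv_apply (𝕜 := ℝ) _).mul_left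

lemma IsTest.integrable_mul (hf : IsTest L f) {F : Pt2 → ℝ} (hF : Continuous F) :
    Integrable fun x => F x * f x :=
  (hF.mul hf.1.continuous).integrable_of_hasCompactSupport hf.2.1.mul_left

lemma integral_Omega_mul_pd {F : Pt2 → ℝ} (hF : ContDiff ℝ 1 F) (hf : IsTest L f) (j : Fin 2) :
    ∫ x in Omega L, F x * pd j f x = -∫ x in Omega L, pd j F x * f x := by
  rw [setIntegral_eq_integral_of_forall_compl_eq_zero fun x hx => by
      rw [hf.pd_eq_zero_of_notMem hx, mul_zero],
    setIntegral_eq_integral_of_forall_compl_eq_zero fun x hx => by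
      rw [hf.eq_zero_of_notMem hx, mul_zero]]
  exact integral_mul_fderiv_eq_neg_fderiv_mul_of_integrable
    (hf.integrable_mul (continuous_pd hF j)) (hf.integrable_mul_pd hF.continuous j)
    (hf.integrable_mul hF.continuous)
    (fun x _ => (hF.differentiable one_ne_zero).differentiableAt)
    (fun x _ => (hf.1.differentiable one_ne_zero).differentiableAt)

lemma isWeakGradient_grad {u : Pt2 → Pt2} (hu : ∀ i, ContDiff ℝ 1 fun x => u x i) :
    IsWeakGradient L u (grad u) :=
  fun _ hf i j => integral_Omega_mul_pd (hu i) hf j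

lemma TVcurl_eq_zero {β : Pt2 → Mat2} (hβ : ∀ i j, ContDiff ℝ 1 fun x => β x i j)
    (hcurl : ∀ i x, pd 0 (fun y => β y i 1) x = pd 1 (fun y => β y i 0) x) :
    TVcurl L β = 0 := by
  refine le_antisymm (sSup_le ?_) bot_le
  rintro _ ⟨φ, hφ, -, rfl⟩
  have hrow : ∀ i, ∫ x in Omega L, (β x i 1 * pd 0 (φ i) x - β x i 0 * pd 1 (φ i) x) = 0 := by
    intro i
    rw [integral_sub ((hφ i).integrable_mul_pd (hβ i 1).continuous 0).integrableOn
      ((hφ i).integrable_mul_pd (hβ i 0).continuous 1).integrableOn,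
      integral_Omega_mul_pd (hβ i 1) (hφ i), integral_Omega_mul_pd (hβ i 0) (hφ i)]
    simp [hcurl]
  simp [hrow]

lemma closure_Omega_subset_Icc (L : ℝ) : closure (Omega L) ⊆ Icc 0 ![1, L] := by
  refine closure_minimal (fun x hx => ⟨fun i => ?_, fun i => ?_⟩) isClosed_Icc <;>
    fin_cases i <;> simp [hx.1.1.le, hx.1.2.le, hx.2.1.le, hx.2.2.le]

lemma memLp_two_restrict_Omega {F : Pt2 → ℝ} (hF : Continuous F) :
    MemLp F 2 (volume.restrict (Omega L)) :=
  (memLp_two_iff_integrable_sq hF.aestronglyMeasurable).2 <|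
    ((hF.pow 2).continuousOn.integrableOn_compact isCompact_Icc).mono_set
      (subset_closure.trans (closure_Omega_subset_Icc L))

end Omega

lemma normSq_symPart_le (M : Mat2) : normSq (symPart M) ≤ normSq M := by
  simp only [normSq, symPart, Fin.sum_univ_two, Matrix.smul_apply, Matrix.add_apply,
    Matrix.transpose_apply, smul_eq_mul]
  nlinarith [sq_nonneg (M 0 1 - M 1 0)]

def diagDisp (g : Pt2 → ℝ) : Pt2 → Pt2 := fun x _ => g x

def shearSlip (f : ℝ → ℝ) (x : Pt2) : Mat2 := f (x 0 - x 1) • !![(1 : ℝ), -1; 1, -1]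

def slipMisfit (g : Pt2 → ℝ) (f : ℝ → ℝ) (x : Pt2) : ℝ :=
  (pd 0 g x - f (x 0 - x 1)) ^ 2 + (pd 1 g x + f (x 0 - x 1)) ^ 2

section diag

variable {L : ℝ} {g : Pt2 → ℝ} {f : ℝ → ℝ}

lemma shearSlip_apply (x : Pt2) (i j : Fin 2) :
    shearSlip f x i j = f (x 0 - x 1) * ![1, -1] j := by
  fin_cases i <;> fin_cases j <;> simp [shearSlip]

lemma contDiff_shearSlip_apply (hf : ContDiff ℝ 1 f) (i j : Fin 2) :
    ContDiff ℝ 1 fun x => shearSlip f x i j := by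
  simp only [shearSlip_apply]
  fun_prop

lemma TVcurl_shearSlip (hf : ContDiff ℝ 1 f) : TVcurl L (shearSlip f) = 0 := by
  refine TVcurl_eq_zero (contDiff_shearSlip_apply hf) fun i x => ?_
  have hdf : DifferentiableAt ℝ f (x 0 - x 1) := (hf.differentiable one_ne_zero).differentiableAt
  have hdt : DifferentiableAt ℝ (fun y : Pt2 => y 0 - y 1) x := by fun_prop
  simp only [shearSlip_apply, Matrix.cons_val_zero, Matrix.cons_val_one, mul_one, mul_neg_one]
  rw [pd_neg, pd_comp hdf hdt, pd_comp hdf hdt, pd_sub (by fun_prop) (by fun_prop),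
    pd_sub (by fun_prop) (by fun_prop)]
  simp [pd_apply]

lemma isAdmissible_diag (hg : ContDiff ℝ 1 g) (hf : ContDiff ℝ 1 f) :
    IsAdmissible L (diagDisp g) (grad (diagDisp g)) (shearSlip f) :=
  ⟨(continuous_pi fun _ => hg.continuous).continuousOn,
    isWeakGradient_grad fun _ => hg,
    fun _ j => memLp_two_restrict_Omega (continuous_pd hg j),
    fun i j => (contDiff_shearSlip_apply hf i j).continuous.locallyIntegrable.locallyIntegrableOn _,
    ae_of_all _ fun x => ⟨f (x 0 - x 1), Or.inl rfl⟩⟩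

lemma normSq_grad_diagDisp_sub_shearSlip (x : Pt2) :
    normSq (grad (diagDisp g) x - shearSlip f x) = 2 * slipMisfit g f x := by
  simp only [normSq, slipMisfit, Fin.sum_univ_two, Matrix.sub_apply, shearSlip_apply, grad,
    diagDisp, Matrix.of_apply, Matrix.cons_val_zero, Matrix.cons_val_one, Matrix.cons_val_fin_one,
    mul_one, mul_neg, sub_neg_eq_add]
  ring

lemma energy_diag_le (σ : ℝ) (hf : ContDiff ℝ 1 f) :
    Energy L σ (grad (diagDisp g)) (shearSlip f) ≤
      2 * ∫⁻ x in Omega L, ENNReal.ofReal (slipMisfit g f x) := by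
  rw [Energy, TVcurl_shearSlip hf, mul_zero, add_zero, ← lintegral_const_mul' _ _ (by simp)]
  refine lintegral_mono fun x => ?_
  rw [← ENNReal.ofReal_ofNat 2, ← ENNReal.ofReal_mul zero_le_two,
    ← normSq_grad_diagDisp_sub_shearSlip]
  exact ENNReal.ofReal_le_ofReal (normSq_symPart_le _)

lemma bcv_diagDisp {γ : ℝ} (h0 : ∀ x ∈ closure (Omega L), x 1 = 0 → g x = 0)
    (hL : ∀ x ∈ closure (Omega L), x 1 = L → g x = γ) : BCv L γ ![1, 1] (diagDisp g) := by
  constructor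
  · intro x hx hx1
    funext i
    simp [diagDisp, h0 x hx hx1]
  · intro x hx hx1
    funext i
    fin_cases i <;> simp [diagDisp, hL x hx hx1]

end diag

def scale (k : ℕ) : ℝ := (4 : ℝ)⁻¹ ^ (k + 1)

lemma scale_pos (k : ℕ) : 0 < scale k := by unfold scale; positivity

lemma scale_le (k : ℕ) : scale k ≤ 4⁻¹ :=
  pow_le_of_le_one (by norm_num) (by norm_num) k.succ_ne_zero

lemma two_mul_scale_lt {j k : ℕ} (h : j < k) : 2 * scale k < scale j := by
  have : scale k ≤ 4⁻¹ * scale j := by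
    rw [scale, scale, ← pow_succ']
    exact pow_le_pow_of_le_one (by norm_num) (by norm_num) (by omega)
  linarith [scale_pos j]

lemma deriv_ramp_scale_mul_eq_zero {j k : ℕ} (hjk : j ≠ k) (c r : ℝ) :
    deriv (ramp (c - 2 * scale j) (c - scale j)) r *
      deriv (ramp (c - 2 * scale k) (c - scale k)) r = 0 := by
  have hj := scale_pos j
  have hk := scale_pos k
  rcases hjk.lt_or_gt with h | h
  · exact deriv_ramp_mul_deriv_ramp_eq_zero (by linarith) (by linarith)
      (by linarith [two_mul_scale_lt h]) r
  · rw [mul_comm]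
    exact deriv_ramp_mul_deriv_ramp_eq_zero (by linarith) (by linarith)
      (by linarith [two_mul_scale_lt h]) r

-- The jump from `0` to `1` across the strip `-2d ≤ x₀ - x₁ ≤ -d`, overridden by the value `1`
-- for `x₁ ≥ 1 - d`: the strip meets the top edge only near the corner `(1, 1)`.
def cornerLayer (d : ℝ) (x : Pt2) : ℝ :=
  1 - ramp (-2 * d) (-d) (x 0 - x 1) * (1 - ramp (1 - 2 * d) (1 - d) (x 1))

def cornerLayerSlip (d t : ℝ) : ℝ := -deriv (ramp (-2 * d) (-d)) t

def layerShearError (d : ℝ) (x : Pt2) : ℝ :=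
  deriv (ramp (-2 * d) (-d)) (x 0 - x 1) * ramp (1 - 2 * d) (1 - d) (x 1)

def layerCutoffError (d : ℝ) (x : Pt2) : ℝ :=
  ramp (-2 * d) (-d) (x 0 - x 1) * deriv (ramp (1 - 2 * d) (1 - d)) (x 1)

section cornerLayer

variable {d : ℝ}

lemma contDiff_cornerLayer : ContDiff ℝ 1 (cornerLayer d) :=
  contDiff_const.sub <| (contDiff_ramp.comp (by fun_prop)).mul
    (contDiff_const.sub (contDiff_ramp.comp (by fun_prop)))

lemma pd_cornerLayer (x : Pt2) (j : Fin 2) :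
    pd j (cornerLayer d) x =
      deriv (ramp (-2 * d) (-d)) (x 0 - x 1) *
          ((Pi.single j 1 : Pt2) 1 - (Pi.single j 1 : Pt2) 0) *
          (1 - ramp (1 - 2 * d) (1 - d) (x 1)) +
        ramp (-2 * d) (-d) (x 0 - x 1) * deriv (ramp (1 - 2 * d) (1 - d)) (x 1) *
          (Pi.single j 1 : Pt2) 1 := by
  have hramp {a b r : ℝ} : DifferentiableAt ℝ (ramp a b) r :=
    (contDiff_ramp.differentiable one_ne_zero).differentiableAt
  have hP : DifferentiableAt ℝ (fun y : Pt2 => ramp (-2 * d) (-d) (y 0 - y 1)) x :=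
    hramp.comp x (by fun_prop)
  have hQ : DifferentiableAt ℝ (fun y : Pt2 => 1 - ramp (1 - 2 * d) (1 - d) (y 1)) x :=
    (hramp.comp x (by fun_prop)).const_sub 1
  unfold cornerLayer
  rw [pd_const_sub, pd_mul hP hQ, pd_const_sub, pd_comp hramp (by fun_prop),
    pd_comp hramp (by fun_prop), pd_sub (by fun_prop) (by fun_prop), pd_apply, pd_apply]
  ring

lemma pd_zero_cornerLayer_sub (x : Pt2) :
    pd 0 (cornerLayer d) x - cornerLayerSlip d (x 0 - x 1) = layerShearError d x := by
  simp only [pd_cornerLayer, cornerLayerSlip, layerShearError, Pi.single_eq_same,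
    Pi.single_eq_of_ne one_ne_zero]
  ring

lemma pd_one_cornerLayer_add (x : Pt2) :
    pd 1 (cornerLayer d) x + cornerLayerSlip d (x 0 - x 1) =
      layerCutoffError d x - layerShearError d x := by
  simp only [pd_cornerLayer, cornerLayerSlip, layerShearError, layerCutoffError,
    Pi.single_eq_same, Pi.single_eq_of_ne zero_ne_one]
  ring

lemma cornerLayer_of_x1_eq_zero (hd : 0 < d) (hd' : d ≤ 2⁻¹) {x : Pt2} (hx0 : 0 ≤ x 0)
    (hx1 : x 1 = 0) : cornerLayer d x = 0 := by
  rw [cornerLayer, hx1, ramp_of_ge (by linarith) (by linarith : -d ≤ x 0 - 0),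
    ramp_of_le (by linarith) (by linarith : (0 : ℝ) ≤ 1 - 2 * d)]
  ring

lemma cornerLayer_of_x1_eq_one (hd : 0 < d) {x : Pt2} (hx1 : x 1 = 1) :
    cornerLayer d x = 1 := by
  rw [cornerLayer, hx1, ramp_of_ge (by linarith) (by linarith : 1 - d ≤ 1)]
  ring

end cornerLayer

lemma layerShearError_mul_eq_zero {j k : ℕ} (hjk : j ≠ k) (x : Pt2) :
    layerShearError (scale j) x * layerShearError (scale k) x = 0 := by
  have h := deriv_ramp_scale_mul_eq_zero hjk 0 (x 0 - x 1)
  simp only [zero_sub, ← neg_mul] at h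
  simp only [layerShearError]
  linear_combination (ramp (1 - 2 * scale j) (1 - scale j) (x 1) *
    ramp (1 - 2 * scale k) (1 - scale k) (x 1)) * h

lemma layerCutoffError_mul_eq_zero {j k : ℕ} (hjk : j ≠ k) (x : Pt2) :
    layerCutoffError (scale j) x * layerCutoffError (scale k) x = 0 := by
  have h := deriv_ramp_scale_mul_eq_zero hjk 1 (x 1)
  simp only [layerCutoffError]
  linear_combination (ramp (-2 * scale j) (-scale j) (x 0 - x 1) *
    ramp (-2 * scale k) (-scale k) (x 0 - x 1)) * h

def cornerBox (d : ℝ) : Set Pt2 := Icc ![1 - 4 * d, 1 - 2 * d] ![1, 1]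

lemma mem_cornerBox {d : ℝ} {x : Pt2} :
    x ∈ cornerBox d ↔ (1 - 4 * d ≤ x 0 ∧ x 0 ≤ 1) ∧ 1 - 2 * d ≤ x 1 ∧ x 1 ≤ 1 := by
  simp only [cornerBox, mem_Icc, Pi.le_def, Fin.forall_fin_two, Matrix.cons_val_zero,
    Matrix.cons_val_one, Matrix.cons_val_fin_one]
  tauto

lemma measurableSet_cornerBox (d : ℝ) : MeasurableSet (cornerBox d) := measurableSet_Icc

lemma volume_cornerBox {d : ℝ} (hd : 0 ≤ d) :
    volume (cornerBox d) = ENNReal.ofReal (8 * d ^ 2) := by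
  rw [cornerBox, Real.volume_Icc_pi, Fin.prod_univ_two, ← ENNReal.ofReal_mul (by simp; linarith)]
  congr 1
  simp only [Matrix.cons_val_zero, Matrix.cons_val_one, Matrix.cons_val_fin_one]
  ring

section layerError

variable {d : ℝ}

lemma layerShearError_eq_zero (hd : 0 < d) {x : Pt2} (hx : x ∈ Omega 1)
    (hbox : x ∉ cornerBox d) :
    layerShearError d x = 0 := by
  by_contra h
  obtain ⟨hP, hQ⟩ := mul_ne_zero_iff.1 h
  have ht := mem_Icc_of_deriv_ramp_ne_zero (by linarith) hP
  have hy := ramp_ne_zero (by linarith) hQ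
  exact hbox (mem_cornerBox.2 ⟨⟨by linarith [ht.1], hx.1.2.le⟩, by linarith, hx.2.2.le⟩)

lemma layerCutoffError_eq_zero (hd : 0 < d) {x : Pt2} (hx : x ∈ Omega 1)
    (hbox : x ∉ cornerBox d) :
    layerCutoffError d x = 0 := by
  by_contra h
  obtain ⟨hP, hQ⟩ := mul_ne_zero_iff.1 h
  have ht := ramp_ne_zero (by linarith) hP
  have hy := mem_Icc_of_deriv_ramp_ne_zero (by linarith) hQ
  exact hbox (mem_cornerBox.2 ⟨⟨by linarith [hy.1], hx.1.2.le⟩, hy.1, hx.2.2.le⟩)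

lemma abs_deriv_ramp_sub_le (hd : 0 < d) (c r : ℝ) :
    |deriv (ramp (c - 2 * d) (c - d)) r| ≤ transitionSlope / d :=
  (abs_deriv_ramp_le (by linarith) r).trans_eq (by ring_nf)

lemma abs_layerShearError_le (hd : 0 < d) (x : Pt2) :
    |layerShearError d x| ≤ transitionSlope / d := by
  have h := abs_deriv_ramp_sub_le hd 0 (x 0 - x 1)
  rw [zero_sub, zero_sub, ← neg_mul] at h
  rw [layerShearError, abs_mul, abs_of_nonneg (ramp_nonneg _)]
  exact (mul_le_of_le_one_right (abs_nonneg _) (ramp_le_one _)).trans h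

lemma abs_layerCutoffError_le (hd : 0 < d) (x : Pt2) :
    |layerCutoffError d x| ≤ transitionSlope / d := by
  rw [layerCutoffError, abs_mul, abs_of_nonneg (ramp_nonneg _)]
  exact (mul_le_of_le_one_left (abs_nonneg _) (ramp_le_one _)).trans
    (abs_deriv_ramp_sub_le hd 1 (x 1))

lemma ofReal_layerError_le_indicator (hd : 0 < d) (c : ℝ) {x : Pt2} (hx : x ∈ Omega 1) :
    ENNReal.ofReal (c ^ 2 * (3 * layerShearError d x ^ 2 + 2 * layerCutoffError d x ^ 2)) ≤
      (cornerBox d).indicator (fun _ => ENNReal.ofReal (c ^ 2 * (5 * (transitionSlope / d) ^ 2)))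
        x := by
  by_cases hbox : x ∈ cornerBox d
  · rw [indicator_of_mem hbox]
    refine ENNReal.ofReal_le_ofReal (mul_le_mul_of_nonneg_left ?_ (sq_nonneg c))
    have hA := pow_le_pow_left₀ (abs_nonneg _) (abs_layerShearError_le hd x) 2
    have hB := pow_le_pow_left₀ (abs_nonneg _) (abs_layerCutoffError_le hd x) 2
    rw [sq_abs] at hA hB
    linarith
  · rw [indicator_of_notMem hbox, layerShearError_eq_zero hd hx hbox,
      layerCutoffError_eq_zero hd hx hbox]
    simp

end layerError

lemma sq_sum_eq_sum_sq_of_mul_eq_zero {ι R : Type*} [CommSemiring R] (s : Finset ι) (f : ι → R)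
    (h : ∀ j ∈ s, ∀ k ∈ s, j ≠ k → f j * f k = 0) : (∑ i ∈ s, f i) ^ 2 = ∑ i ∈ s, f i ^ 2 := by
  rw [sq, Finset.sum_mul_sum]
  refine Finset.sum_congr rfl fun j hj => ?_
  rw [Finset.sum_eq_single j (fun k hk hkj => h j hj k hk hkj.symm) (absurd hj), sq]

def profile (γ : ℝ) (N : ℕ) (x : Pt2) : ℝ :=
  γ / N * ∑ k ∈ Finset.range N, cornerLayer (scale k) x

def profileSlip (γ : ℝ) (N : ℕ) (t : ℝ) : ℝ :=
  γ / N * ∑ k ∈ Finset.range N, cornerLayerSlip (scale k) t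

section profile

variable {γ : ℝ} {N : ℕ}

lemma contDiff_profile : ContDiff ℝ 1 (profile γ N) :=
  contDiff_const.mul (ContDiff.sum fun _ _ => contDiff_cornerLayer)

lemma contDiff_profileSlip : ContDiff ℝ 1 (profileSlip γ N) :=
  contDiff_const.mul (ContDiff.sum fun _ _ => contDiff_ramp.deriv'.neg)

lemma profile_of_x1_eq_zero {x : Pt2} (hx0 : 0 ≤ x 0) (hx1 : x 1 = 0) : profile γ N x = 0 := by
  simp [profile, cornerLayer_of_x1_eq_zero (scale_pos _)
    ((scale_le _).trans (by norm_num)) hx0 hx1]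

lemma profile_of_x1_eq_one (hN : N ≠ 0) {x : Pt2} (hx1 : x 1 = 1) : profile γ N x = γ := by
  simp only [profile, cornerLayer_of_x1_eq_one (scale_pos _) hx1, Finset.sum_const,
    Finset.card_range, nsmul_eq_mul, mul_one]
  field_simp

lemma slipMisfit_profile (x : Pt2) :
    slipMisfit (profile γ N) (profileSlip γ N) x =
      (γ / N) ^ 2 * ((∑ k ∈ Finset.range N, layerShearError (scale k) x) ^ 2 +
        (∑ k ∈ Finset.range N, layerCutoffError (scale k) x -
          ∑ k ∈ Finset.range N, layerShearError (scale k) x) ^ 2) := by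
  have hdiff : ∀ k ∈ Finset.range N, DifferentiableAt ℝ (cornerLayer (scale k)) x :=
    fun _ _ => (contDiff_cornerLayer.differentiable one_ne_zero).differentiableAt
  have hpd (j : Fin 2) :
      pd j (profile γ N) x = γ / N * ∑ k ∈ Finset.range N, pd j (cornerLayer (scale k)) x := by
    unfold profile
    rw [pd_const_mul (DifferentiableAt.fun_sum hdiff), pd_sum _ hdiff]
  simp only [slipMisfit, hpd, profileSlip, ← mul_sub, ← mul_add, ← Finset.sum_sub_distrib,
    ← Finset.sum_add_distrib, pd_zero_cornerLayer_sub, pd_one_cornerLayer_add]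
  ring

lemma slipMisfit_profile_le (x : Pt2) :
    slipMisfit (profile γ N) (profileSlip γ N) x ≤
      ∑ k ∈ Finset.range N, (γ / N) ^ 2 *
        (3 * layerShearError (scale k) x ^ 2 + 2 * layerCutoffError (scale k) x ^ 2) := by
  set A := ∑ k ∈ Finset.range N, layerShearError (scale k) x
  set B := ∑ k ∈ Finset.range N, layerCutoffError (scale k) x
  have hA : A ^ 2 = ∑ k ∈ Finset.range N, layerShearError (scale k) x ^ 2 :=
    sq_sum_eq_sum_sq_of_mul_eq_zero _ _ fun j _ k _ hjk => layerShearError_mul_eq_zero hjk x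
  have hB : B ^ 2 = ∑ k ∈ Finset.range N, layerCutoffError (scale k) x ^ 2 :=
    sq_sum_eq_sum_sq_of_mul_eq_zero _ _ fun j _ k _ hjk => layerCutoffError_mul_eq_zero hjk x
  have hAB : A ^ 2 + (B - A) ^ 2 ≤ 3 * A ^ 2 + 2 * B ^ 2 := by nlinarith [sq_nonneg (A + B)]
  rw [slipMisfit_profile, ← Finset.mul_sum, Finset.sum_add_distrib, ← Finset.mul_sum,
    ← Finset.mul_sum, ← hA, ← hB]
  exact mul_le_mul_of_nonneg_left hAB (sq_nonneg _)

lemma lintegral_slipMisfit_profile_le :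
    ∫⁻ x in Omega 1, ENNReal.ofReal (slipMisfit (profile γ N) (profileSlip γ N) x) ≤
      ENNReal.ofReal (40 * transitionSlope ^ 2 * γ ^ 2 / N) := by
  set c := γ / N
  set C := transitionSlope
  let bump (k : ℕ) : Pt2 → ℝ≥0∞ :=
    (cornerBox (scale k)).indicator fun _ => ENNReal.ofReal (c ^ 2 * (5 * (C / scale k) ^ 2))
  have hpt : ∀ x ∈ Omega 1, ENNReal.ofReal (slipMisfit (profile γ N) (profileSlip γ N) x) ≤
      ∑ k ∈ Finset.range N, bump k x := fun x hx =>
    calc _ ≤ ENNReal.ofReal (∑ k ∈ Finset.range N, c ^ 2 *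
          (3 * layerShearError (scale k) x ^ 2 + 2 * layerCutoffError (scale k) x ^ 2)) :=
          ENNReal.ofReal_le_ofReal (slipMisfit_profile_le x)
      _ = ∑ k ∈ Finset.range N, ENNReal.ofReal (c ^ 2 *
          (3 * layerShearError (scale k) x ^ 2 + 2 * layerCutoffError (scale k) x ^ 2)) :=
          ENNReal.ofReal_sum_of_nonneg fun _ _ => by positivity
      _ ≤ _ := Finset.sum_le_sum fun k _ => ofReal_layerError_le_indicator (scale_pos k) c hx
  have hbump : ∀ k, Measurable (bump k) :=
    fun k => measurable_const.indicator (measurableSet_cornerBox _)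
  calc _ ≤ ∫⁻ x in Omega 1, ∑ k ∈ Finset.range N, bump k x :=
        setLIntegral_mono (Finset.measurable_sum _ fun k _ => hbump k) hpt
    _ ≤ ∫⁻ x, ∑ k ∈ Finset.range N, bump k x := lintegral_mono' Measure.restrict_le_self le_rfl
    _ = ∑ k ∈ Finset.range N, ENNReal.ofReal (40 * C ^ 2 * c ^ 2) := by
        rw [lintegral_finsetSum _ fun k _ => hbump k]
        refine Finset.sum_congr rfl fun k _ => ?_
        rw [lintegral_indicator_const (measurableSet_cornerBox _),
          volume_cornerBox (scale_pos k).le, ← ENNReal.ofReal_mul (by positivity)]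
        congr 1
        field_simp [(scale_pos k).ne']
        ring
    _ = _ := by
        rw [Finset.sum_const, Finset.card_range, nsmul_eq_mul, ← ENNReal.ofReal_natCast,
          ← ENNReal.ofReal_mul (Nat.cast_nonneg N)]
        congr 1
        rcases eq_or_ne (N : ℝ) 0 with hN | hN
        · simp [hN]
        · simp only [c]
          field_simp

end profile

lemma exists_admissible_energy_lt (σ γ : ℝ) {ε : ℝ} (hε : 0 < ε) :
    ∃ u Du β, IsAdmissible 1 u Du β ∧ BCv 1 γ ![1, 1] u ∧ TVcurl 1 β ≠ ⊤ ∧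
      Energy 1 σ Du β < ENNReal.ofReal ε := by
  obtain ⟨N, hN⟩ := exists_nat_gt (80 * transitionSlope ^ 2 * γ ^ 2 / ε)
  have hN0 : (0 : ℝ) < N := lt_of_le_of_lt (by positivity) hN
  refine ⟨diagDisp (profile γ N), grad (diagDisp (profile γ N)), shearSlip (profileSlip γ N),
    isAdmissible_diag contDiff_profile contDiff_profileSlip, bcv_diagDisp ?_ ?_,
    by simp [TVcurl_shearSlip contDiff_profileSlip], ?_⟩
  · intro x hx hx1
    exact profile_of_x1_eq_zero (by simpa using (closure_Omega_subset_Icc 1 hx).1 0) hx1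
  · intro x _ hx1
    exact profile_of_x1_eq_one (by exact_mod_cast hN0.ne') hx1
  · calc Energy 1 σ _ _ ≤ 2 * ENNReal.ofReal (40 * transitionSlope ^ 2 * γ ^ 2 / N) :=
          (energy_diag_le σ contDiff_profileSlip).trans
            (by gcongr; exact lintegral_slipMisfit_profile_le)
      _ = ENNReal.ofReal (80 * transitionSlope ^ 2 * γ ^ 2 / N) := by
          rw [← ENNReal.ofReal_ofNat 2, ← ENNReal.ofReal_mul zero_le_two]
          ring_nf
      _ < ENNReal.ofReal ε := by
          rw [ENNReal.ofReal_lt_ofReal_iff hε, div_lt_iff₀ hN0]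
          rw [div_lt_iff₀ hε] at hN
          linarith

theorem J_one_eq_zero_BC1_general (σ γ : ℝ) :
    J 1 σ γ ![1, 1] = 0 ∧
    ∀ ε : ℝ, 0 < ε → ∃ u Du β, IsAdmissible 1 u Du β ∧ BCv 1 γ ![1, 1] u ∧
      Energy 1 σ Du β < ENNReal.ofReal ε := by
  refine ⟨le_antisymm (ENNReal.le_of_forall_pos_le_add fun δ hδ _ => ?_) bot_le, fun ε hε => ?_⟩
  · obtain ⟨u, Du, β, hadm, hbc, htv, hE⟩ :=
      exists_admissible_energy_lt σ γ (NNReal.coe_pos.2 hδ)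
    calc J 1 σ γ ![1, 1] ≤ Energy 1 σ Du β := sInf_le ⟨u, Du, β, hadm, hbc, htv, rfl⟩
      _ ≤ 0 + δ := by simpa using hE.le
  · obtain ⟨u, Du, β, hadm, hbc, -, hE⟩ := exists_admissible_energy_lt σ γ hε
    exact ⟨u, Du, β, hadm, hbc, hE⟩

/-- Under BC1, at the critical aspect ratio L = 1, J_1 = 0: for every
ε > 0 there is an admissible pair satisfying BC1 on Ω_1 with energy < ε. -/
theorem J_one_eq_zero_BC1 (σ γ : ℝ) (hσ : 0 < σ) (hγ : 0 < γ) :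
    J 1 σ γ ![1, 1] = 0 ∧
    ∀ ε : ℝ, 0 < ε → ∃ u Du β, IsAdmissible 1 u Du β ∧ BCv 1 γ ![1, 1] u ∧
      Energy 1 σ Du β < ENNReal.ofReal ε :=
  J_one_eq_zero_BC1_general σ γ

end
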